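/- Let f : ℝⁿ → ℝ be C² and satisfy the PL inequality f(x) - f* ≤ (1/(2μ))‖∇f(x)‖² in a neighborhood of a local minimum x̄ with value f*. If λ is a nonzero eigenvalue of ∇²f(x̄), then λ ≥ μ. -/

import Mathlib

/-!
Restrict `f` to the line `t ↦ x̄ + t • v`. Since `∇f x̄ = 0` and `v` is an eigenvector of
the Hessian, L'Hôpital gives `(f (x̄ + t • v) - f x̄) / t² → λ‖v‖² / 2`, while
`‖∇f (x̄ + t • v)‖² / t² → λ²‖v‖²` as `t → 0⁺`. Minimality makes the first limit
nonnegative, so `λ > 0`, and the PL inequality passes to the limits as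
`λ‖v‖² / 2 ≤ λ²‖v‖² / (2μ)`, i.e. `μ ≤ λ`.
-/

open Filter Topology

theorem tendsto_sub_div_sq_of_hasDerivAt {g g' : ℝ → ℝ} {a : ℝ}
    (hg : ∀ᶠ t in 𝓝 0, HasDerivAt g (g' t) t) (hg'0 : g' 0 = 0) (hg' : HasDerivAt g' a 0) :
    Tendsto (fun t => (g t - g 0) / t ^ 2) (𝓝[>] 0) (𝓝 (a / 2)) := by
  have hslope : Tendsto (fun t => g' t / t) (𝓝[>] 0) (𝓝 a) := by
    refine (hg'.tendsto_slope.mono_left (nhdsGT_le_nhdsNE 0)).congr fun t => ?_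
    rw [slope_def_field, hg'0, sub_zero, sub_zero]
  refine HasDerivAt.lhopital_zero_nhdsGT (f' := g') (g' := fun t => 2 * t) ?_ ?_ ?_ ?_ ?_ ?_
  · exact (hg.filter_mono nhdsWithin_le_nhds).mono fun t ht => ht.sub_const _
  · exact Eventually.of_forall fun t => by simpa [mul_comm] using hasDerivAt_pow 2 t
  · filter_upwards [self_mem_nhdsWithin] with t (ht : 0 < t) using by positivity
  · simpa using (hg.self_of_nhds.continuousAt.tendsto.sub_const (g 0)).mono_left
      (nhdsWithin_le_nhds (s := Set.Ioi 0))
  · simpa using ((continuous_pow 2).tendsto' (0 : ℝ) 0 (by simp)).mono_left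
      (nhdsWithin_le_nhds (s := Set.Ioi 0))
  · refine (hslope.div_const 2).congr fun t => ?_
    rw [div_div, mul_comm]

theorem HasDerivAt.tendsto_norm_sq_div_sq {F : Type*} [NormedAddCommGroup F] [NormedSpace ℝ F]
    {h : ℝ → F} {w : F} (hh : HasDerivAt h w 0) (h0 : h 0 = 0) :
    Tendsto (fun t => ‖h t‖ ^ 2 / t ^ 2) (𝓝[≠] 0) (𝓝 (‖w‖ ^ 2)) := by
  refine (hh.tendsto_slope.norm.pow 2).congr fun t => ?_
  rw [slope_def_module, h0, sub_zero, sub_zero, norm_smul, mul_pow, norm_inv,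
    Real.norm_eq_abs, inv_pow, sq_abs, inv_mul_eq_div]

theorem hasDerivAt_add_smul {F : Type*} [NormedAddCommGroup F] [NormedSpace ℝ F]
    (x v : F) (t : ℝ) : HasDerivAt (fun s : ℝ => x + s • v) v t := by
  simpa using ((hasDerivAt_id t).smul_const v).const_add x

theorem tendsto_add_smul_nhds_zero {F : Type*} [NormedAddCommGroup F] [NormedSpace ℝ F]
    (x v : F) : Tendsto (fun t : ℝ => x + t • v) (𝓝 0) (𝓝 x) := by
  simpa using (hasDerivAt_add_smul x v 0).continuousAt.tendsto

section Gradient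

variable {E : Type*} [NormedAddCommGroup E] [InnerProductSpace ℝ E] [CompleteSpace E]

theorem ContDiff.gradient {f : E → ℝ} {n : WithTop ℕ∞} (hf : ContDiff ℝ (n + 1) f) :
    ContDiff ℝ n (gradient f) :=
  (InnerProductSpace.toDual ℝ E).symm.contDiff.comp (hf.fderiv_right le_rfl)

theorem IsLocalMin.gradient_eq_zero {f : E → ℝ} {x : E} (h : IsLocalMin f x) :
    gradient f x = 0 := by
  rw [gradient, h.fderiv_eq_zero, map_zero]

theorem hasDerivAt_comp_add_smul {f : E → ℝ} {x v : E} {t : ℝ}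
    (hf : DifferentiableAt ℝ f (x + t • v)) :
    HasDerivAt (fun s : ℝ => f (x + s • v)) (inner ℝ (gradient f (x + t • v)) v) t := by
  rw [inner_gradient_left]
  exact hf.hasFDerivAt.comp_hasDerivAt t (hasDerivAt_add_smul x v t)

theorem hasDerivAt_gradient_comp_add_smul {f : E → ℝ} {x v : E}
    (hf : DifferentiableAt ℝ (gradient f) x) :
    HasDerivAt (fun s : ℝ => gradient f (x + s • v)) (fderiv ℝ (gradient f) x v) 0 :=
  hf.hasFDerivAt.comp_hasDerivAt_of_eq 0 (hasDerivAt_add_smul x v 0) (by simp)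

theorem tendsto_sub_div_sq_add_smul {f : E → ℝ} {x : E} (v : E)
    (hf : ∀ᶠ y in 𝓝 x, DifferentiableAt ℝ f y) (hgrad : DifferentiableAt ℝ (gradient f) x)
    (hcrit : gradient f x = 0) :
    Tendsto (fun t : ℝ => (f (x + t • v) - f x) / t ^ 2) (𝓝[>] 0)
      (𝓝 (inner ℝ (fderiv ℝ (gradient f) x v) v / 2)) := by
  have hdir_deriv :=
    (hasDerivAt_gradient_comp_add_smul (v := v) hgrad).inner ℝ (hasDerivAt_const 0 v)
  simp only [inner_zero_right, zero_add] at hdir_deriv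
  simpa using tendsto_sub_div_sq_of_hasDerivAt
    (((tendsto_add_smul_nhds_zero x v).eventually hf).mono fun t ht =>
      hasDerivAt_comp_add_smul ht) (by simp [hcrit]) hdir_deriv

end Gradient

/-- Under the PL inequality, every nonzero eigenvalue of the Hessian at the minimizer
is at least `μ`. -/
theorem pl_eigenvalue_lower_bound {n : ℕ}
    (f : EuclideanSpace ℝ (Fin n) → ℝ) (xb : EuclideanSpace ℝ (Fin n))
    (hf : ContDiff ℝ 2 f) (hmin : IsLocalMin f xb)
    (μ : ℝ) (hμ : 0 < μ)
    (hPL : ∀ᶠ x in 𝓝 xb, f x - f xb ≤ (1 / (2 * μ)) * ‖gradient f x‖ ^ 2)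
    (lam : ℝ) (hlam : lam ≠ 0)
    (v : EuclideanSpace ℝ (Fin n)) (hv : v ≠ 0)
    (heig : fderiv ℝ (gradient f) xb v = lam • v) :
    μ ≤ lam := by
  have hcrit : gradient f xb = 0 := hmin.gradient_eq_zero
  have hgrad : DifferentiableAt ℝ (gradient f) xb :=
    (hf.gradient (n := 1)).differentiable one_ne_zero xb
  have hline : Tendsto (fun t : ℝ => xb + t • v) (𝓝[>] 0) (𝓝 xb) :=
    (tendsto_add_smul_nhds_zero xb v).mono_left nhdsWithin_le_nhds
  have hquot := tendsto_sub_div_sq_add_smul v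
    (Eventually.of_forall (hf.differentiable two_ne_zero)) hgrad hcrit
  rw [heig, real_inner_smul_left, real_inner_self_eq_norm_sq] at hquot
  have hgrad_quot := (hasDerivAt_gradient_comp_add_smul (v := v) hgrad).tendsto_norm_sq_div_sq
    (by simpa using hcrit)
  rw [heig, norm_smul, mul_pow, Real.norm_eq_abs, sq_abs] at hgrad_quot
  have hquot_nonneg : 0 ≤ lam * ‖v‖ ^ 2 / 2 :=
    ge_of_tendsto hquot <| (hline.eventually hmin).mono fun t ht =>
      div_nonneg (sub_nonneg.2 ht) (sq_nonneg t)
  have hquot_le : lam * ‖v‖ ^ 2 / 2 ≤ 1 / (2 * μ) * (lam ^ 2 * ‖v‖ ^ 2) :=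
    le_of_tendsto_of_tendsto hquot
      ((hgrad_quot.mono_left (nhdsGT_le_nhdsNE 0)).const_mul _) <|
      (hline.eventually hPL).mono fun t ht => by
        dsimp only; rw [← mul_div_assoc]; exact div_le_div_of_nonneg_right ht (sq_nonneg t)
  have hv2 : 0 < ‖v‖ ^ 2 := by positivity
  have hlam_pos : 0 < lam := lt_of_le_of_ne (by nlinarith) hlam.symm
  have hscaled : μ * (lam * ‖v‖ ^ 2) ≤ lam * (lam * ‖v‖ ^ 2) := by
    rw [div_mul_eq_mul_div, one_mul, div_le_div_iff₀ two_pos (by positivity)] at hquot_le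
    linarith
  exact le_of_mul_le_mul_right hscaled (mul_pos hlam_pos hv2)
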